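/- arXiv:2112.00714 — 5 statements merged into one kernel-verified Lean document; each statement's English description precedes it below -/
import Mathlib

section
/- Let Γ be a finite tree on a vertex set V, let w : V → ℤ, and let A be the symmetric V×V rational matrix with A(v,v) = w(v), A(u,v) = 1 when u and v are adjacent in Γ, and A(u,v) = 0 otherwise. Let τ_i, τ_j ∈ V, let b_i, b_j : V → ℚ be functions with b_i(α) ≥ 0 for all α and b_i(α) > 0 exactly when α = τ_i, and b_j(α) ≥ 0 with b_j(α) > 0 exactly when α = τ_j. Suppose m_i, m_j : V → ℚ take only positive values and satisfy, for every α ∈ V, b_i(α) + Σ_{β∈V} A(α,β)·m_i(β) = 0 and b_j(α) + Σ_{β∈V} A(α,β)·m_j(β) = 0. Define q(α) = m_j(α)/m_i(α). Then: (1) q is strictly decreasing along the unique path in Γ from τ_j to τ_i, i.e., if α comes strictly before β on this path then q(α) > q(β); and (2) for every connected component Δ of the graph obtained from Γ by deleting all vertices of this path, q is constant on Δ ∪ {ρ_Δ}, where ρ_Δ is the unique vertex of the path adjacent to some vertex of Δ. -/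
/-!
Green's identity for a symmetric matrix `A`: for a vertex set `S`, the sum over `S` of
`m_i · (A m_j) - m_j · (A m_i)` only involves the entries of `A` that cross the boundary of `S`.
Take for `S` the side of `u` of an edge `uv` of the tree: the only crossing entry is `A u v = 1`,
and since `A m = -b` with `b` concentrated at one vertex,
`m_i(u) m_j(v) - m_j(u) m_i(v) =
  [τ_i ∈ S] m_j(τ_i) b_i(τ_i) - [τ_j ∈ S] m_i(τ_j) b_j(τ_j)`.
Hence `q` does not change across an edge whose removal leaves `τ_i` and `τ_j` on the same side
(every edge not on the geodesic), and strictly drops across every edge of the geodesic traversed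
from `τ_j` towards `τ_i`.
-/

open Finset Matrix

theorem Matrix.IsSymm.sum_mul_mulVec_sub_mul_mulVec {ι R : Type*} [Fintype ι] [DecidableEq ι]
    [CommRing R] {A : Matrix ι ι R} (hA : A.IsSymm) (x y : ι → R) (S : Finset ι) :
    ∑ i ∈ S, (x i * (A *ᵥ y) i - y i * (A *ᵥ x) i) =
      ∑ i ∈ S, ∑ j ∈ Sᶜ, A i j * (x i * y j - y i * x j) := by
  have hrow : ∀ i, x i * (A *ᵥ y) i - y i * (A *ᵥ x) i =
      ∑ j, A i j * (x i * y j - y i * x j) := by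
    intro i
    simp only [Matrix.mulVec, dotProduct, mul_sum, ← sum_sub_distrib]
    exact sum_congr rfl fun j _ => by ring
  have hinner : ∑ i ∈ S, ∑ j ∈ S, A i j * (x i * y j - y i * x j) = 0 := by
    simp only [mul_sub, sum_sub_distrib, sub_eq_zero]
    rw [sum_comm]
    exact sum_congr rfl fun i _ => sum_congr rfl fun j _ => by rw [hA.apply]; ring
  simp only [hrow, ← sum_add_sum_compl S, sum_add_distrib, hinner, zero_add]

theorem List.Pairwise.rel_of_idxOf_lt {α : Type*} [BEq α] [LawfulBEq α] {r : α → α → Prop}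
    {l : List α} {a b : α} (hl : l.Pairwise r) (ha : a ∈ l) (hb : b ∈ l)
    (hab : l.idxOf a < l.idxOf b) : r a b := by
  have ha' := List.idxOf_lt_length_iff.mpr ha
  have hb' := List.idxOf_lt_length_iff.mpr hb
  simpa only [List.getElem_idxOf] using List.pairwise_iff_getElem.mp hl _ _ ha' hb' hab

theorem Pi.eq_single_of_pos_iff {ι K : Type*} [DecidableEq ι] [Zero K] [PartialOrder K]
    {b : ι → K} {i : ι} (h0 : ∀ a, 0 ≤ b a) (hpos : ∀ a, 0 < b a ↔ a = i) :
    b = Pi.single i (b i) := by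
  funext a
  rcases eq_or_ne a i with rfl | hai
  · rw [Pi.single_eq_same]
  · rw [Pi.single_eq_of_ne hai]
    exact ((h0 a).lt_or_eq.resolve_left fun h => hai ((hpos a).mp h)).symm

namespace SimpleGraph

variable {V : Type*} (G : SimpleGraph V)

def edgeSide (u v : V) : Set V := {a | (G.deleteEdges {s(u, v)}).Reachable u a}

variable {G} {u v a b : V}

theorem mem_edgeSide : a ∈ G.edgeSide u v ↔ (G.deleteEdges {s(u, v)}).Reachable u a := Iff.rfl

theorem mem_edgeSide_self : u ∈ G.edgeSide u v := Reachable.refl u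

theorem mem_edgeSide_of_adj (ha : a ∈ G.edgeSide u v) (hab : G.Adj a b)
    (hne : s(a, b) ≠ s(u, v)) : b ∈ G.edgeSide u v :=
  ha.trans (deleteEdges_adj.mpr ⟨hab, hne⟩).reachable

theorem eq_of_adj_of_mem_edgeSide_of_notMem (ha : a ∈ G.edgeSide u v)
    (hb : b ∉ G.edgeSide u v) (hab : G.Adj a b) : a = u ∧ b = v := by
  by_cases he : s(a, b) = s(u, v)
  · rcases Sym2.eq_iff.mp he with h | ⟨-, rfl⟩
    · exact h
    · exact absurd mem_edgeSide_self hb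
  · exact absurd (mem_edgeSide_of_adj ha hab he) hb

theorem Walk.mem_edgeSide_iff_of_notMem_edges (W : G.Walk a b) (hW : s(u, v) ∉ W.edges) :
    a ∈ G.edgeSide u v ↔ b ∈ G.edgeSide u v := by
  have hab : (G.deleteEdges {s(u, v)}).Reachable a b :=
    ⟨W.toDeleteEdges _ fun e he h => hW (Set.mem_singleton_iff.mp h ▸ he)⟩
  exact ⟨fun h => h.trans hab, fun h => h.trans hab.symm⟩

theorem IsAcyclic.notMem_edgeSide_swap (hG : G.IsAcyclic) (huv : G.Adj u v)
    (ha : a ∈ G.edgeSide u v) : a ∉ G.edgeSide v u := by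
  intro ha'
  rw [mem_edgeSide, Sym2.eq_swap] at ha'
  exact isBridge_iff.mp (isAcyclic_iff_forall_adj_isBridge.mp hG huv) (ha.trans ha'.symm)

theorem Walk.IsPath.mem_edgeSide_of_mem_darts {P : G.Walk a b} (hP : P.IsPath) {d : G.Dart}
    (hd : d ∈ P.darts) : a ∈ G.edgeSide d.fst d.snd ∧ b ∈ G.edgeSide d.snd d.fst := by
  induction P with
  | nil => simp at hd
  | @cons a c b hac P ih =>
    rw [cons_isPath_iff] at hP
    rw [darts_cons, List.mem_cons] at hd
    rcases hd with rfl | hd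
    · refine ⟨mem_edgeSide_self,
        (P.mem_edgeSide_iff_of_notMem_edges fun he => ?_).mp mem_edgeSide_self⟩
      exact hP.2 (P.snd_mem_support_of_mem_edges he)
    · obtain ⟨hc, hb⟩ := ih hP.1 hd
      refine ⟨mem_edgeSide_of_adj hc hac.symm fun he => hP.2 ?_, hb⟩
      rcases Sym2.eq_iff.mp he with ⟨-, rfl⟩ | ⟨-, rfl⟩
      · exact P.dart_snd_mem_support_of_mem_darts hd
      · exact P.dart_fst_mem_support_of_mem_darts hd

theorem Walk.isChain_support_of_forall_mem_darts {r : V → V → Prop} :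
    ∀ {a b : V} (W : G.Walk a b), (∀ d ∈ W.darts, r d.fst d.snd) → W.support.IsChain r
  | _, _, .nil, _ => by simp
  | _, _, .cons hac W, h => by
    rw [support_cons, ← W.cons_tail_support, List.isChain_cons_cons, W.cons_tail_support]
    exact ⟨h _ (List.mem_cons_self ..),
      W.isChain_support_of_forall_mem_darts fun d hd => h d (by simp [hd])⟩

theorem Reachable.apply_eq_of_forall_adj {β : Type*} {f : V → β}
    (hf : ∀ x y, G.Adj x y → f x = f y)
    (hab : G.Reachable a b) : f a = f b := by
  obtain ⟨W⟩ := hab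
  induction W with
  | nil => rfl
  | cons hac _ ih => exact (hf _ _ hac).trans ih

section EdgeIdentity

variable [Fintype V] {R : Type*} [CommRing R] {A : Matrix V V R}

open Classical in
theorem IsAcyclic.sum_edgeSide_mul_mulVec_sub_mul_mulVec (hG : G.IsAcyclic) (hA : A.IsSymm)
    (hAG : ∀ a b, a ≠ b → ¬G.Adj a b → A a b = 0) (huv : G.Adj u v) (x y : V → R) :
    ∑ a ∈ (G.edgeSide u v).toFinset, (x a * (A *ᵥ y) a - y a * (A *ᵥ x) a) =
      A u v * (x u * y v - y u * x v) := by
  set S := (G.edgeSide u v).toFinset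
  have hu : u ∈ S := Set.mem_toFinset.mpr mem_edgeSide_self
  have hv : v ∉ S := fun h =>
    hG.notMem_edgeSide_swap huv.symm mem_edgeSide_self (Set.mem_toFinset.mp h)
  have hcut : ∀ a ∈ S, ∀ b ∈ Sᶜ, A a b ≠ 0 → a = u ∧ b = v := by
    intro a ha b hb hab
    rw [Set.mem_toFinset] at ha
    rw [mem_compl, Set.mem_toFinset] at hb
    refine eq_of_adj_of_mem_edgeSide_of_notMem ha hb ?_
    by_contra hnadj
    exact hab (hAG a b (by rintro rfl; exact hb ha) hnadj)
  rw [hA.sum_mul_mulVec_sub_mul_mulVec, sum_eq_single_of_mem u hu,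
    sum_eq_single_of_mem v (mem_compl.mpr hv)]
  · intro b hb hbv
    rw [not_imp_comm.mp (hcut u hu b hb) fun h => hbv h.2, zero_mul]
  · intro a ha hau
    refine sum_eq_zero fun b hb => ?_
    rw [not_imp_comm.mp (hcut a ha b hb) fun h => hau h.1, zero_mul]

open Classical in
theorem IsAcyclic.mul_sub_mul_eq_of_mulVec_eq_neg_single [DecidableEq V] [DecidableRel G.Adj]
    (hG : G.IsAcyclic) {D : V → R} (hA : A = diagonal D + G.adjMatrix R) (huv : G.Adj u v)
    {x y : V → R} {σ τ : V} {c d : R}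
    (hx : A *ᵥ x = -Pi.single σ c) (hy : A *ᵥ y = -Pi.single τ d) :
    x u * y v - y u * x v =
      (if σ ∈ G.edgeSide u v then y σ * c else 0) -
        (if τ ∈ G.edgeSide u v then x τ * d else 0) := by
  have hAG : ∀ a b, a ≠ b → ¬G.Adj a b → A a b = 0 := fun a b hab hnadj => by
    simp [hA, diagonal_apply_ne _ hab, hnadj]
  have huv' : A u v = 1 := by simp [hA, diagonal_apply_ne _ huv.ne, huv]
  rw [← one_mul (_ - _), ← huv', ← hG.sum_edgeSide_mul_mulVec_sub_mul_mulVec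
    (hA ▸ (isSymm_diagonal D).add G.isSymm_adjMatrix) hAG huv, hx, hy]
  simp only [Pi.neg_apply, Pi.single_apply, mul_neg, mul_ite, mul_zero, sub_neg_eq_add,
    sum_add_distrib, sum_neg_distrib, sum_ite_eq', Set.mem_toFinset]
  ring

end EdgeIdentity

section Ratio

variable [Fintype V] [DecidableEq V] [DecidableRel G.Adj] {K : Type*} [Field K] [LinearOrder K]
  [IsStrictOrderedRing K] {A : Matrix V V K} {D : V → K} {x y : V → K} {σ τ : V} {c d : K}

theorem IsAcyclic.div_eq_div_of_adj (hG : G.IsAcyclic) (hA : A = diagonal D + G.adjMatrix K)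
    (hx : A *ᵥ x = -Pi.single σ c) (hy : A *ᵥ y = -Pi.single τ d) (hx0 : ∀ a, 0 < x a)
    (huv : G.Adj u v) (hσ : σ ∉ G.edgeSide u v) (hτ : τ ∉ G.edgeSide u v) :
    y u / x u = y v / x v := by
  have key := hG.mul_sub_mul_eq_of_mulVec_eq_neg_single hA huv hx hy
  rw [if_neg hσ, if_neg hτ, sub_zero] at key
  rw [div_eq_div_iff (hx0 u).ne' (hx0 v).ne']
  linear_combination -key

theorem IsAcyclic.div_lt_div_of_adj (hG : G.IsAcyclic) (hA : A = diagonal D + G.adjMatrix K)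
    (hx : A *ᵥ x = -Pi.single σ c) (hy : A *ᵥ y = -Pi.single τ d) (hx0 : ∀ a, 0 < x a)
    (hd : 0 < d) (huv : G.Adj u v) (hσ : σ ∉ G.edgeSide u v) (hτ : τ ∈ G.edgeSide u v) :
    y v / x v < y u / x u := by
  have key := hG.mul_sub_mul_eq_of_mulVec_eq_neg_single hA huv hx hy
  rw [if_neg hσ, if_pos hτ, zero_sub] at key
  rw [div_lt_div_iff₀ (hx0 v) (hx0 u)]
  nlinarith [mul_pos (hx0 τ) hd]

theorem IsAcyclic.div_eq_div_of_notMem_edges (hG : G.IsAcyclic)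
    (hA : A = diagonal D + G.adjMatrix K)
    (hx : A *ᵥ x = -Pi.single σ c) (hy : A *ᵥ y = -Pi.single τ d) (hx0 : ∀ a, 0 < x a)
    (P : G.Walk τ σ) (huv : G.Adj u v) (hP : s(u, v) ∉ P.edges) :
    y u / x u = y v / x v := by
  by_cases hσ : σ ∈ G.edgeSide u v
  · have hτ : τ ∈ G.edgeSide u v := (P.mem_edgeSide_iff_of_notMem_edges hP).mpr hσ
    exact (hG.div_eq_div_of_adj hA hx hy hx0 huv.symm (hG.notMem_edgeSide_swap huv hσ)
      (hG.notMem_edgeSide_swap huv hτ)).symm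
  · exact hG.div_eq_div_of_adj hA hx hy hx0 huv hσ
      (mt (P.mem_edgeSide_iff_of_notMem_edges hP).mp hσ)

theorem IsAcyclic.div_lt_div_of_mem_darts (hG : G.IsAcyclic) (hA : A = diagonal D + G.adjMatrix K)
    (hx : A *ᵥ x = -Pi.single σ c) (hy : A *ᵥ y = -Pi.single τ d) (hx0 : ∀ a, 0 < x a)
    (hd : 0 < d) {P : G.Walk τ σ} (hP : P.IsPath) {e : G.Dart} (he : e ∈ P.darts) :
    y e.snd / x e.snd < y e.fst / x e.fst := by
  obtain ⟨hτ, hσ⟩ := hP.mem_edgeSide_of_mem_darts he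
  exact hG.div_lt_div_of_adj hA hx hy hx0 hd e.adj (hG.notMem_edgeSide_swap e.adj.symm hσ) hτ

end Ratio

end SimpleGraph

theorem stmt_7_general (V : Type*) [Fintype V] [DecidableEq V]
    (G : SimpleGraph V) [DecidableRel G.Adj] (hG : G.IsTree)
    (w : V → ℤ) (A : Matrix V V ℚ)
    (hA : ∀ u v : V, A u v =
      if u = v then (w u : ℚ) else if G.Adj u v then 1 else 0)
    (τi τj : V)
    (bi bj mi mj : V → ℚ)
    (hbi0 : ∀ α, 0 ≤ bi α) (hbi : ∀ α, 0 < bi α ↔ α = τi)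
    (hbj0 : ∀ α, 0 ≤ bj α) (hbj : ∀ α, 0 < bj α ↔ α = τj)
    (hmi : ∀ α, 0 < mi α)
    (heqi : ∀ α, bi α + ∑ β, A α β * mi β = 0)
    (heqj : ∀ α, bj α + ∑ β, A α β * mj β = 0)
    (q : V → ℚ) (hq : ∀ α, q α = mj α / mi α)
    (P : G.Walk τj τi) (hP : P.IsPath) :
    (∀ α β : V, α ∈ P.support → β ∈ P.support →
        P.support.idxOf α < P.support.idxOf β → q β < q α) ∧
    (∀ (u v : V) (hu : u ∉ P.support) (hv : v ∉ P.support),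
        (G.induce {x : V | x ∉ P.support}).Reachable ⟨u, hu⟩ ⟨v, hv⟩ →
          q u = q v) ∧
    (∀ (u v : V) (hu : u ∉ P.support) (hv : v ∉ P.support) (ρ : V),
        (G.induce {x : V | x ∉ P.support}).Reachable ⟨u, hu⟩ ⟨v, hv⟩ →
        ρ ∈ P.support → G.Adj ρ v → q ρ = q u) := by
  have hA' : A = diagonal (fun v => (w v : ℚ)) + G.adjMatrix ℚ := by
    ext u v
    rw [hA]
    split_ifs <;> simp_all [diagonal_apply_ne]
  have hxi : A *ᵥ mi = -Pi.single τi (bi τi) := by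
    rw [← Pi.eq_single_of_pos_iff hbi0 hbi]
    exact funext fun a => eq_neg_of_add_eq_zero_right (heqi a)
  have hyj : A *ᵥ mj = -Pi.single τj (bj τj) := by
    rw [← Pi.eq_single_of_pos_iff hbj0 hbj]
    exact funext fun a => eq_neg_of_add_eq_zero_right (heqj a)
  have hstep : ∀ a b, G.Adj a b → s(a, b) ∉ P.edges → q a = q b := fun a b hab he => by
    simpa only [hq] using hG.isAcyclic.div_eq_div_of_notMem_edges hA' hxi hyj hmi P hab he
  have hoff : ∀ (u v : V) (hu : u ∉ P.support) (hv : v ∉ P.support),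
      (G.induce {x : V | x ∉ P.support}).Reachable ⟨u, hu⟩ ⟨v, hv⟩ → q u = q v :=
    fun u v hu hv h =>
      h.apply_eq_of_forall_adj (f := fun a : ({x | x ∉ P.support} : Set V) => q a) fun a b hab =>
        hstep a b (by simpa using hab) fun he => a.2 (P.fst_mem_support_of_mem_edges he)
  refine ⟨fun α β hα hβ hαβ => ?_, hoff, fun u v hu hv ρ h _ hρv => ?_⟩
  · have hchain : P.support.IsChain (fun a b => q b < q a) :=
      P.isChain_support_of_forall_mem_darts fun e he => by
        simpa only [hq] using hG.isAcyclic.div_lt_div_of_mem_darts hA' hxi hyj hmi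
          ((hbj τj).mpr rfl) hP he
    exact (List.isChain_iff_pairwise.mp hchain).rel_of_idxOf_lt hα hβ hαβ
  · exact (hstep ρ v hρv fun he => hv (P.snd_mem_support_of_mem_edges he)).trans
      (hoff u v hu hv h).symm

/-- Behaviour of the ratio `q = m_j / m_i` of multiplicities of two branches on
the dual tree `Γ` of a resolution: `q` is strictly decreasing along the geodesic
from `τ_j` to `τ_i`, and is constant on `Δ ∪ {ρ_Δ}` for every connected component
`Δ` of the complement of the geodesic, where `ρ_Δ` is the vertex of the geodesic
attached to `Δ`. -/
theorem stmt_7 (V : Type*) [Fintype V] [DecidableEq V]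
    (G : SimpleGraph V) [DecidableRel G.Adj] (hG : G.IsTree)
    (w : V → ℤ) (A : Matrix V V ℚ)
    (hA : ∀ u v : V, A u v =
      if u = v then (w u : ℚ) else if G.Adj u v then 1 else 0)
    (τi τj : V)
    (bi bj mi mj : V → ℚ)
    (hbi0 : ∀ α, 0 ≤ bi α) (hbi : ∀ α, 0 < bi α ↔ α = τi)
    (hbj0 : ∀ α, 0 ≤ bj α) (hbj : ∀ α, 0 < bj α ↔ α = τj)
    (hmi : ∀ α, 0 < mi α) (hmj : ∀ α, 0 < mj α)
    (heqi : ∀ α, bi α + ∑ β, A α β * mi β = 0)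
    (heqj : ∀ α, bj α + ∑ β, A α β * mj β = 0)
    (q : V → ℚ) (hq : ∀ α, q α = mj α / mi α)
    (P : G.Walk τj τi) (hP : P.IsPath) :
    (∀ α β : V, α ∈ P.support → β ∈ P.support →
        P.support.idxOf α < P.support.idxOf β → q β < q α) ∧
    (∀ (u v : V) (hu : u ∉ P.support) (hv : v ∉ P.support),
        (G.induce {x : V | x ∉ P.support}).Reachable ⟨u, hu⟩ ⟨v, hv⟩ →
          q u = q v) ∧
    (∀ (u v : V) (hu : u ∉ P.support) (hv : v ∉ P.support) (ρ : V),
        (G.induce {x : V | x ∉ P.support}).Reachable ⟨u, hu⟩ ⟨v, hv⟩ →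
        ρ ∈ P.support → G.Adj ρ v → q ρ = q u) :=
  stmt_7_general V G hG w A hA τi τj bi bj mi mj hbi0 hbi hbj0 hbj hmi heqi heqj q hq P hP
end

section
/- Let k ≥ 1 and let m(i,j) = min(i,j)·(k+1−max(i,j))/(k+1) for 1 ≤ i, j ≤ k (the entries of −M⁻¹ for the A_k intersection matrix M). Then for all 1 ≤ i, j ≤ k with 2i ≥ k+1 and 2j ≥ k+1 one has m(i,j) ≥ m(i, k+1−j), with equality if and only if 2·min(i,j) = k+1. -/
/-- For the entries `m(i,j) = min(i,j)·(k+1−max(i,j))/(k+1)` of minus the inverse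
of the `A_k` intersection matrix: for indices `i`, `j` on the upper half of the
chain (`2i ≥ k+1`, `2j ≥ k+1`) one has `m(i,j) ≥ m(i,k+1−j)`, with equality if and
only if `2·min(i,j) = k+1`. -/
theorem stmt_9 (k : ℕ) (hk : 1 ≤ k) (m : ℕ → ℕ → ℚ)
    (hm : ∀ i j : ℕ, 1 ≤ i → i ≤ k → 1 ≤ j → j ≤ k →
      m i j = ((min i j : ℕ) : ℚ) * (((k : ℚ) + 1) - ((max i j : ℕ) : ℚ)) / ((k : ℚ) + 1)) :
    ∀ i j : ℕ, 1 ≤ i → i ≤ k → 1 ≤ j → j ≤ k → k + 1 ≤ 2 * i → k + 1 ≤ 2 * j →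
      m i (k + 1 - j) ≤ m i j ∧ (m i j = m i (k + 1 - j) ↔ 2 * min i j = k + 1) := by
  intro i j h1i hik h1j hjk h2i h2j
  have hj'1 : 1 ≤ k + 1 - j := by omega
  have hj'k : k + 1 - j ≤ k := by omega
  have hj'i : k + 1 - j ≤ i := by omega
  have hjk1 : j ≤ k + 1 := by omega
  have hq : (0:ℚ) < (k : ℚ) + 1 := by positivity
  rw [hm i j h1i hik h1j hjk, hm i (k + 1 - j) h1i hik hj'1 hj'k,
    min_eq_right (by exact_mod_cast hj'i), max_eq_left (by exact_mod_cast hj'i)]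
  have hcast : ((k + 1 - j : ℕ) : ℚ) = (k : ℚ) + 1 - (j : ℚ) := by
    push_cast [Nat.cast_sub hjk1]; ring
  rcases le_total i j with hij | hji
  · rw [min_eq_left hij, max_eq_right hij]
    rw [div_le_div_iff_of_pos_right hq, div_eq_div_iff hq.ne' hq.ne', hcast]
    have hi2 : (k : ℚ) + 1 ≤ 2 * (i : ℚ) := by exact_mod_cast h2i
    have hj' : (1:ℚ) ≤ (k : ℚ) + 1 - (j : ℚ) := by
      have : (j : ℚ) ≤ (k : ℚ) := by exact_mod_cast hjk
      linarith
    constructor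
    · nlinarith
    · constructor
      · intro h
        have h2 : ((k : ℚ) + 1 - (j : ℚ)) * (2 * (i : ℚ) - ((k:ℚ)+1)) = 0 := by nlinarith
        have : 2 * (i : ℚ) = (k : ℚ) + 1 := by
          rcases mul_eq_zero.1 h2 with h3 | h3
          · linarith
          · linarith
        exact_mod_cast this
      · intro h
        have : 2 * (i : ℚ) = (k : ℚ) + 1 := by exact_mod_cast h
        linear_combination ((k:ℚ) + 1 - (j:ℚ)) * ((k:ℚ) + 1) * this
  · rw [min_eq_right hji, max_eq_left hji]
    rw [div_le_div_iff_of_pos_right hq, div_eq_div_iff hq.ne' hq.ne', hcast]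
    have hj2 : (k : ℚ) + 1 ≤ 2 * (j : ℚ) := by exact_mod_cast h2j
    have hi' : (1:ℚ) ≤ (k : ℚ) + 1 - (i : ℚ) := by
      have : (i : ℚ) ≤ (k : ℚ) := by exact_mod_cast hik
      linarith
    constructor
    · nlinarith
    · constructor
      · intro h
        have h2 : ((k : ℚ) + 1 - (i : ℚ)) * (2 * (j : ℚ) - ((k:ℚ)+1)) = 0 := by nlinarith
        have : 2 * (j : ℚ) = (k : ℚ) + 1 := by
          rcases mul_eq_zero.1 h2 with h3 | h3
          · linarith
          · linarith
        exact_mod_cast this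
      · intro h
        have : 2 * (j : ℚ) = (k : ℚ) + 1 := by exact_mod_cast h
        linear_combination ((k:ℚ) + 1 - (i:ℚ)) * ((k:ℚ) + 1) * this
end

section
/- Let a = (a_1, ..., a_7) be given by a_σ = m(2,σ), where m = −M_{E7}⁻¹ is the inverse of minus the E_7 intersection matrix (so a = (3,6,8,4,6,4,2)), and let b = (2,4,6,3,5,4,3,4,8) be the 9th column of −N⁻¹ for the 9×9 matrix N with diagonal (−2,−2,−2,−2,−2,−2,−4,−2,−1) and off-diagonal 1-entries at the edges {1,2},{2,3},{3,4},{3,5},{5,6},{6,7},{7,9},{8,9}. Then, in the ring of formal power series ℚ[[X]] (where each factor 1−X^n with n ≥ 1 is a unit), the following equalities of Weil–Poincaré series hold: (1−X^{a_2})(1−X^{a_3})·((1−X^{a_1})(1−X^{a_4})(1−X^{a_7}))⁻¹ = (1−X^{b_3})(1−X^{b_9})·((1−X^{b_1})(1−X^{b_4})(1−X^{b_8}))⁻¹ = (1−X^6)(1−X^8)·((1−X^2)(1−X^3)(1−X^4))⁻¹. -/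
open PowerSeries

/-- The intersection matrix of the minimal resolution of the `E_7` rational double
point. -/
def ME7 : Matrix (Fin 7) (Fin 7) ℚ :=
  !![-2,  1,  0,  0,  0,  0,  0;
      1, -2,  1,  0,  0,  0,  0;
      0,  1, -2,  1,  1,  0,  0;
      0,  0,  1, -2,  0,  0,  0;
      0,  0,  1,  0, -2,  1,  0;
      0,  0,  0,  0,  1, -2,  1;
      0,  0,  0,  0,  0,  1, -2]

/-- The intersection matrix of the minimal embedded resolution of the curve `C''`
on the `E_7` singularity (edges `{1,2},{2,3},{3,4},{3,5},{5,6},{6,7},{7,9},{8,9}`,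
diagonal `(−2,−2,−2,−2,−2,−2,−4,−2,−1)`). -/
def N15 : Matrix (Fin 9) (Fin 9) ℚ :=
  !![-2,  1,  0,  0,  0,  0,  0,  0,  0;
      1, -2,  1,  0,  0,  0,  0,  0,  0;
      0,  1, -2,  1,  1,  0,  0,  0,  0;
      0,  0,  1, -2,  0,  0,  0,  0,  0;
      0,  0,  1,  0, -2,  1,  0,  0,  0;
      0,  0,  0,  0,  1, -2,  1,  0,  0;
      0,  0,  0,  0,  0,  1, -4,  0,  1;
      0,  0,  0,  0,  0,  0,  0, -2,  1;
      0,  0,  0,  0,  0,  0,  1,  1, -1]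

section Aux
variable {α : Type*} {m : ℕ}
@[simp] lemma cons_val_two' (x : α) (u : Fin (m+2) → α) :
    Matrix.vecCons x u 2 = Matrix.vecHead (Matrix.vecTail u) := rfl
@[simp] lemma cons_val_three' (x : α) (u : Fin (m+3) → α) :
    Matrix.vecCons x u 3 = Matrix.vecHead (Matrix.vecTail (Matrix.vecTail u)) := rfl
@[simp] lemma cons_val_four' (x : α) (u : Fin (m+4) → α) :
    Matrix.vecCons x u 4 = Matrix.vecHead (Matrix.vecTail (Matrix.vecTail (Matrix.vecTail u))) := rfl
@[simp] lemma cons_val_five' (x : α) (u : Fin (m+5) → α) :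
    Matrix.vecCons x u 5 = Matrix.vecHead (Matrix.vecTail (Matrix.vecTail (Matrix.vecTail (Matrix.vecTail u)))) := rfl
@[simp] lemma cons_val_six' (x : α) (u : Fin (m+6) → α) :
    Matrix.vecCons x u 6 = Matrix.vecHead (Matrix.vecTail (Matrix.vecTail (Matrix.vecTail (Matrix.vecTail (Matrix.vecTail u))))) := rfl
@[simp] lemma cons_val_seven' (x : α) (u : Fin (m+7) → α) :
    Matrix.vecCons x u 7 = Matrix.vecHead (Matrix.vecTail (Matrix.vecTail (Matrix.vecTail (Matrix.vecTail (Matrix.vecTail (Matrix.vecTail u)))))) := rfl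
@[simp] lemma cons_val_eight' (x : α) (u : Fin (m+8) → α) :
    Matrix.vecCons x u 8 = Matrix.vecHead (Matrix.vecTail (Matrix.vecTail (Matrix.vecTail (Matrix.vecTail (Matrix.vecTail (Matrix.vecTail (Matrix.vecTail u))))))) := rfl

lemma sum_univ_nine' {β : Type*} [AddCommMonoid β] (f : Fin 9 → β) :
    ∑ i : Fin 9, f i = f 0 + f 1 + f 2 + f 3 + f 4 + f 5 + f 6 + f 7 + f 8 := by
  rw [Fin.sum_univ_succ, Fin.sum_univ_eight,
    show (Fin.succ 0 : Fin 9) = 1 from rfl, show (Fin.succ 1 : Fin 9) = 2 from rfl,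
    show (Fin.succ 2 : Fin 9) = 3 from rfl, show (Fin.succ 3 : Fin 9) = 4 from rfl,
    show (Fin.succ 4 : Fin 9) = 5 from rfl, show (Fin.succ 5 : Fin 9) = 6 from rfl,
    show (Fin.succ 6 : Fin 9) = 7 from rfl, show (Fin.succ 7 : Fin 9) = 8 from rfl]
  abel
end Aux

def ME7inv : Matrix (Fin 7) (Fin 7) ℚ :=
  !![-2, -3, -4, -2, -3, -2, -1;
     -3, -6, -8, -4, -6, -4, -2;
     -4, -8, -12, -6, -9, -6, -3;
     -2, -4, -6, -7/2, -9/2, -3, -3/2;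
     -3, -6, -9, -9/2, -15/2, -5, -5/2;
     -2, -4, -6, -3, -5, -4, -2;
     -1, -2, -3, -3/2, -5/2, -2, -3/2]

def N15inv : Matrix (Fin 9) (Fin 9) ℚ :=
  !![-2, -3, -4, -2, -3, -2, -1, -1, -2;
     -3, -6, -8, -4, -6, -4, -2, -2, -4;
     -4, -8, -12, -6, -9, -6, -3, -3, -6;
     -2, -4, -6, -7/2, -9/2, -3, -3/2, -3/2, -3;
     -3, -6, -9, -9/2, -15/2, -5, -5/2, -5/2, -5;
     -2, -4, -6, -3, -5, -4, -2, -2, -4;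
     -1, -2, -3, -3/2, -5/2, -2, -3/2, -3/2, -3;
     -1, -2, -3, -3/2, -5/2, -2, -3/2, -5/2, -4;
     -2, -4, -6, -3, -5, -4, -3, -4, -8]

lemma ME7_inv_eq : ME7⁻¹ = ME7inv := by
  apply Matrix.inv_eq_right_inv
  ext i j
  fin_cases i <;> fin_cases j <;>
    norm_num [ME7, ME7inv, Matrix.mul_apply, Fin.sum_univ_seven, Matrix.one_apply, Fin.ext_iff]

set_option maxHeartbeats 2000000 in
lemma N15_inv_eq : N15⁻¹ = N15inv := by
  apply Matrix.inv_eq_right_inv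
  ext i j
  fin_cases i <;> fin_cases j <;>
    norm_num [N15, N15inv, Matrix.mul_apply, sum_univ_nine', Matrix.one_apply, Fin.ext_iff]

/-- The Weil–Poincaré series of the curvette `C'` at `E_2` of the minimal
resolution of `E_7` (exponents `a σ = m(2,σ)`, the entries of row 2 of `−ME7⁻¹`)
coincides with the Weil–Poincaré series of the curve `C''` (exponents `b σ`, the
entries of the 9th column of `−N15⁻¹`), both being
`(1−X⁶)(1−X⁸)/((1−X²)(1−X³)(1−X⁴))` in `ℚ⟦X⟧`. -/
theorem stmt_15 (a : Fin 7 → ℕ) (b : Fin 9 → ℕ)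
    (ha : ∀ σ : Fin 7, (a σ : ℚ) = (-(ME7⁻¹)) 1 σ)
    (hb : ∀ σ : Fin 9, (b σ : ℚ) = (-(N15⁻¹)) σ 8) :
    ((1 - (X : ℚ⟦X⟧) ^ (a 1)) * (1 - X ^ (a 2)) *
        ((1 - X ^ (a 0)) * (1 - X ^ (a 3)) * (1 - X ^ (a 6)))⁻¹ =
      (1 - (X : ℚ⟦X⟧) ^ (b 2)) * (1 - X ^ (b 8)) *
        ((1 - X ^ (b 0)) * (1 - X ^ (b 3)) * (1 - X ^ (b 7)))⁻¹) ∧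
    ((1 - (X : ℚ⟦X⟧) ^ (b 2)) * (1 - X ^ (b 8)) *
        ((1 - X ^ (b 0)) * (1 - X ^ (b 3)) * (1 - X ^ (b 7)))⁻¹ =
      (1 - (X : ℚ⟦X⟧) ^ 6) * (1 - X ^ 8) *
        ((1 - X ^ 2) * (1 - X ^ 3) * (1 - X ^ 4))⁻¹) := by
  have ha1 : a 1 = 6 := by
    have h := ha 1
    rw [ME7_inv_eq] at h
    have h2 : (a 1 : ℚ) = (6 : ℕ) := by rw [h]; norm_num [ME7inv]
    exact_mod_cast h2
  have ha2 : a 2 = 8 := by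
    have h := ha 2
    rw [ME7_inv_eq] at h
    have h2 : (a 2 : ℚ) = (8 : ℕ) := by rw [h]; norm_num [ME7inv]
    exact_mod_cast h2
  have ha0 : a 0 = 3 := by
    have h := ha 0
    rw [ME7_inv_eq] at h
    have h2 : (a 0 : ℚ) = (3 : ℕ) := by rw [h]; norm_num [ME7inv]
    exact_mod_cast h2
  have ha3 : a 3 = 4 := by
    have h := ha 3
    rw [ME7_inv_eq] at h
    have h2 : (a 3 : ℚ) = (4 : ℕ) := by rw [h]; norm_num [ME7inv]
    exact_mod_cast h2
  have ha6 : a 6 = 2 := by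
    have h := ha 6
    rw [ME7_inv_eq] at h
    have h2 : (a 6 : ℚ) = (2 : ℕ) := by rw [h]; norm_num [ME7inv]
    exact_mod_cast h2
  have hb2 : b 2 = 6 := by
    have h := hb 2
    rw [N15_inv_eq] at h
    have h2 : (b 2 : ℚ) = (6 : ℕ) := by rw [h]; norm_num [N15inv]
    exact_mod_cast h2
  have hb8 : b 8 = 8 := by
    have h := hb 8
    rw [N15_inv_eq] at h
    have h2 : (b 8 : ℚ) = (8 : ℕ) := by rw [h]; norm_num [N15inv]
    exact_mod_cast h2
  have hb0 : b 0 = 2 := by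
    have h := hb 0
    rw [N15_inv_eq] at h
    have h2 : (b 0 : ℚ) = (2 : ℕ) := by rw [h]; norm_num [N15inv]
    exact_mod_cast h2
  have hb3 : b 3 = 3 := by
    have h := hb 3
    rw [N15_inv_eq] at h
    have h2 : (b 3 : ℚ) = (3 : ℕ) := by rw [h]; norm_num [N15inv]
    exact_mod_cast h2
  have hb7 : b 7 = 4 := by
    have h := hb 7
    rw [N15_inv_eq] at h
    have h2 : (b 7 : ℚ) = (4 : ℕ) := by rw [h]; norm_num [N15inv]
    exact_mod_cast h2
  rw [ha1, ha2, ha0, ha3, ha6, hb2, hb8, hb0, hb3, hb7]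
  exact ⟨by ring_nf, rfl⟩
end

section
/- Let c = (2,4,6,3,5,4,3,4,8,9) be the 10th column of −M'⁻¹ for the 10×10 matrix M' with diagonal (−2,−2,−2,−2,−2,−2,−4,−2,−2,−1) and off-diagonal 1-entries at the edges {1,2},{2,3},{3,4},{3,5},{5,6},{6,7},{7,9},{8,9},{9,10}, and let d = (3,6,8,4,6,4,2,7,8,9) be the 10th column of −M''⁻¹ for the 10×10 matrix M'' with diagonal (−2,−3,−2,−2,−2,−2,−2,−2,−2,−1) and off-diagonal 1-entries at the edges {1,2},{2,3},{3,4},{3,5},{5,6},{6,7},{2,8},{8,9},{9,10}. Then, in the ring of formal power series ℚ[[X]]: (1−X^{c_3})(1−X^{c_9})·((1−X^{c_1})(1−X^{c_4})(1−X^{c_8})(1−X^{c_10}))⁻¹ = (1−X^{d_2})(1−X^{d_3})·((1−X^{d_1})(1−X^{d_4})(1−X^{d_7})(1−X^{d_10}))⁻¹ = (1−X^6)(1−X^8)·((1−X^2)(1−X^3)(1−X^4)(1−X^9))⁻¹. -/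
open PowerSeries

/-- The intersection matrix of the resolution defining the divisorial valuation
`v'` on the `E_7` singularity (edges
`{1,2},{2,3},{3,4},{3,5},{5,6},{6,7},{7,9},{8,9},{9,10}`, diagonal
`(−2,−2,−2,−2,−2,−2,−4,−2,−2,−1)`). -/
def M16' : Matrix (Fin 10) (Fin 10) ℚ :=
  !![-2,  1,  0,  0,  0,  0,  0,  0,  0,  0;
      1, -2,  1,  0,  0,  0,  0,  0,  0,  0;
      0,  1, -2,  1,  1,  0,  0,  0,  0,  0;
      0,  0,  1, -2,  0,  0,  0,  0,  0,  0;
      0,  0,  1,  0, -2,  1,  0,  0,  0,  0;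
      0,  0,  0,  0,  1, -2,  1,  0,  0,  0;
      0,  0,  0,  0,  0,  1, -4,  0,  1,  0;
      0,  0,  0,  0,  0,  0,  0, -2,  1,  0;
      0,  0,  0,  0,  0,  0,  1,  1, -2,  1;
      0,  0,  0,  0,  0,  0,  0,  0,  1, -1]

/-- The intersection matrix of the resolution defining the divisorial valuation
`v''` on the `E_7` singularity (edges
`{1,2},{2,3},{3,4},{3,5},{5,6},{6,7},{2,8},{8,9},{9,10}`, diagonal
`(−2,−3,−2,−2,−2,−2,−2,−2,−2,−1)`). -/
def M16'' : Matrix (Fin 10) (Fin 10) ℚ :=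
  !![-2,  1,  0,  0,  0,  0,  0,  0,  0,  0;
      1, -3,  1,  0,  0,  0,  0,  1,  0,  0;
      0,  1, -2,  1,  1,  0,  0,  0,  0,  0;
      0,  0,  1, -2,  0,  0,  0,  0,  0,  0;
      0,  0,  1,  0, -2,  1,  0,  0,  0,  0;
      0,  0,  0,  0,  1, -2,  1,  0,  0,  0;
      0,  0,  0,  0,  0,  1, -2,  0,  0,  0;
      0,  1,  0,  0,  0,  0,  0, -2,  1,  0;
      0,  0,  0,  0,  0,  0,  0,  1, -2,  1;
      0,  0,  0,  0,  0,  0,  0,  0,  1, -1]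

def A16' : Matrix (Fin 10) (Fin 10) ℚ :=
  !![-2, -3, -4, -2, -3, -2, -1, -1, -2, -2;
-3, -6, -8, -4, -6, -4, -2, -2, -4, -4;
-4, -8, -12, -6, -9, -6, -3, -3, -6, -6;
-2, -4, -6, -7/2, -9/2, -3, -3/2, -3/2, -3, -3;
-3, -6, -9, -9/2, -15/2, -5, -5/2, -5/2, -5, -5;
-2, -4, -6, -3, -5, -4, -2, -2, -4, -4;
-1, -2, -3, -3/2, -5/2, -2, -3/2, -3/2, -3, -3;
-1, -2, -3, -3/2, -5/2, -2, -3/2, -5/2, -4, -4;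
-2, -4, -6, -3, -5, -4, -3, -4, -8, -8;
-2, -4, -6, -3, -5, -4, -3, -4, -8, -9]

def A16'' : Matrix (Fin 10) (Fin 10) ℚ :=
  !![-2, -3, -4, -2, -3, -2, -1, -3, -3, -3;
-3, -6, -8, -4, -6, -4, -2, -6, -6, -6;
-4, -8, -12, -6, -9, -6, -3, -8, -8, -8;
-2, -4, -6, -7/2, -9/2, -3, -3/2, -4, -4, -4;
-3, -6, -9, -9/2, -15/2, -5, -5/2, -6, -6, -6;
-2, -4, -6, -3, -5, -4, -2, -4, -4, -4;
-1, -2, -3, -3/2, -5/2, -2, -3/2, -2, -2, -2;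
-3, -6, -8, -4, -6, -4, -2, -7, -7, -7;
-3, -6, -8, -4, -6, -4, -2, -7, -8, -8;
-3, -6, -8, -4, -6, -4, -2, -7, -8, -9]

set_option maxHeartbeats 4000000 in
lemma hA16' : M16'⁻¹ = A16' := by
  apply Matrix.inv_eq_right_inv
  ext i j
  fin_cases i <;> fin_cases j <;>
    norm_num [M16', A16', Matrix.mul_apply, Fin.sum_univ_succ, Matrix.one_apply, Fin.ext_iff]

set_option maxHeartbeats 4000000 in
lemma hA16'' : M16''⁻¹ = A16'' := by
  apply Matrix.inv_eq_right_inv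
  ext i j
  fin_cases i <;> fin_cases j <;>
    norm_num [M16'', A16'', Matrix.mul_apply, Fin.sum_univ_succ, Matrix.one_apply, Fin.ext_iff]

/-- The Weil–Poincaré series of the divisorial valuations `v'` and `v''` on the
`E_7` singularity (with exponents `c`, `d` the 10th columns of `−M16'⁻¹`,
`−M16''⁻¹`) coincide, both being
`(1−X⁶)(1−X⁸)/((1−X²)(1−X³)(1−X⁴)(1−X⁹))` in `ℚ⟦X⟧`. -/
theorem stmt_16 (c : Fin 10 → ℕ) (d : Fin 10 → ℕ)
    (hc : ∀ σ : Fin 10, (c σ : ℚ) = (-(M16'⁻¹)) σ 9)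
    (hd : ∀ σ : Fin 10, (d σ : ℚ) = (-(M16''⁻¹)) σ 9) :
    ((1 - (X : ℚ⟦X⟧) ^ (c 2)) * (1 - X ^ (c 8)) *
        ((1 - X ^ (c 0)) * (1 - X ^ (c 3)) * (1 - X ^ (c 7)) * (1 - X ^ (c 9)))⁻¹ =
      (1 - (X : ℚ⟦X⟧) ^ (d 1)) * (1 - X ^ (d 2)) *
        ((1 - X ^ (d 0)) * (1 - X ^ (d 3)) * (1 - X ^ (d 6)) * (1 - X ^ (d 9)))⁻¹) ∧
    ((1 - (X : ℚ⟦X⟧) ^ (d 1)) * (1 - X ^ (d 2)) *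
        ((1 - X ^ (d 0)) * (1 - X ^ (d 3)) * (1 - X ^ (d 6)) * (1 - X ^ (d 9)))⁻¹ =
      (1 - (X : ℚ⟦X⟧) ^ 6) * (1 - X ^ 8) *
        ((1 - X ^ 2) * (1 - X ^ 3) * (1 - X ^ 4) * (1 - X ^ 9))⁻¹) := by
  have c2 : c 2 = 6 := by
    have := hc 2; rw [hA16'] at this
    norm_num [Matrix.neg_apply, show A16' 2 9 = -6 from rfl] at this
    exact_mod_cast this
  have c8 : c 8 = 8 := by
    have := hc 8; rw [hA16'] at this
    norm_num [Matrix.neg_apply, show A16' 8 9 = -8 from rfl] at this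
    exact_mod_cast this
  have c0 : c 0 = 2 := by
    have := hc 0; rw [hA16'] at this
    norm_num [Matrix.neg_apply, show A16' 0 9 = -2 from rfl] at this
    exact_mod_cast this
  have c3 : c 3 = 3 := by
    have := hc 3; rw [hA16'] at this
    norm_num [Matrix.neg_apply, show A16' 3 9 = -3 from rfl] at this
    exact_mod_cast this
  have c7 : c 7 = 4 := by
    have := hc 7; rw [hA16'] at this
    norm_num [Matrix.neg_apply, show A16' 7 9 = -4 from rfl] at this
    exact_mod_cast this
  have c9 : c 9 = 9 := by
    have := hc 9; rw [hA16'] at this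
    norm_num [Matrix.neg_apply, show A16' 9 9 = -9 from rfl] at this
    exact_mod_cast this
  have d1 : d 1 = 6 := by
    have := hd 1; rw [hA16''] at this
    norm_num [Matrix.neg_apply, show A16'' 1 9 = -6 from rfl] at this
    exact_mod_cast this
  have d2 : d 2 = 8 := by
    have := hd 2; rw [hA16''] at this
    norm_num [Matrix.neg_apply, show A16'' 2 9 = -8 from rfl] at this
    exact_mod_cast this
  have d0 : d 0 = 3 := by
    have := hd 0; rw [hA16''] at this
    norm_num [Matrix.neg_apply, show A16'' 0 9 = -3 from rfl] at this
    exact_mod_cast this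
  have d3 : d 3 = 4 := by
    have := hd 3; rw [hA16''] at this
    norm_num [Matrix.neg_apply, show A16'' 3 9 = -4 from rfl] at this
    exact_mod_cast this
  have d6 : d 6 = 2 := by
    have := hd 6; rw [hA16''] at this
    norm_num [Matrix.neg_apply, show A16'' 6 9 = -2 from rfl] at this
    exact_mod_cast this
  have d9 : d 9 = 9 := by
    have := hd 9; rw [hA16''] at this
    norm_num [Matrix.neg_apply, show A16'' 9 9 = -9 from rfl] at this
    exact_mod_cast this
  rw [c0, c2, c3, c7, c8, c9, d0, d1, d2, d3, d6, d9]
  have h : (1 - (X : ℚ⟦X⟧) ^ 3) * (1 - X ^ 4) * (1 - X ^ 2) * (1 - X ^ 9)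
      = (1 - X ^ 2) * (1 - X ^ 3) * (1 - X ^ 4) * (1 - X ^ 9) := by ring
  rw [h]
  exact ⟨rfl, rfl⟩
end

section
/- Let n be a nonempty finite index set and let A be a symmetric real n×n matrix that is negative definite and satisfies A(i,j) ≥ 0 for all i ≠ j. Assume that the graph on n in which distinct vertices i, j are adjacent exactly when A(i,j) > 0 is connected. Then A is invertible and every entry of −A⁻¹ is strictly positive. -/
open Matrix

/-- Core positivity lemma: if `B` is positive definite (via quadratic form),
symmetric, has nonpositive off-diagonal entries, the graph with edges
`B i k < 0` is connected, and `B *ᵥ x = Pi.single j 1`, then `x` is entrywise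
positive. -/
lemma stmt_17_aux {n : Type*} [Fintype n] [DecidableEq n]
    (B : Matrix n n ℝ)
    (hsym : ∀ i k : n, B i k = B k i)
    (hpd : ∀ x : n → ℝ, x ≠ 0 → 0 < x ⬝ᵥ B.mulVec x)
    (hoff : ∀ i k : n, i ≠ k → B i k ≤ 0)
    (hconn : (SimpleGraph.fromRel (fun i k => B i k < 0)).Connected)
    (x : n → ℝ) (j : n) (hx : B.mulVec x = Pi.single j 1) :
    ∀ i, 0 < x i := by
  -- Step 1: x is nonnegative.
  have hxnn : ∀ i, 0 ≤ x i := by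
    set p : n → ℝ := fun i => max (x i) 0 with hp
    set y : n → ℝ := fun i => max (-x i) 0 with hy
    have hpnn : ∀ i, 0 ≤ p i := fun i => le_max_right _ _
    have hynn : ∀ i, 0 ≤ y i := fun i => le_max_right _ _
    have hdecomp : x = p - y := by
      funext i
      simp only [hp, hy, Pi.sub_apply]
      rcases le_total (x i) 0 with h | h
      · rw [max_eq_right h, max_eq_left (by linarith)]; ring
      · rw [max_eq_left h, max_eq_right (by linarith)]; ring
    have hyp : ∀ i, y i * p i = 0 := by
      intro i
      rcases le_total (x i) 0 with h | h
      · simp [hp, hy, max_eq_right h]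
      · simp [hp, hy, max_eq_right (by linarith : -x i ≤ (0:ℝ))]
    have hy0 : y = 0 := by
      by_contra hy0
      have h1 : 0 < y ⬝ᵥ B.mulVec y := hpd y hy0
      have h2 : y ⬝ᵥ B.mulVec y = y ⬝ᵥ B.mulVec p - y ⬝ᵥ B.mulVec x := by
        rw [hdecomp, Matrix.mulVec_sub, dotProduct_sub]; ring
      have h3 : y ⬝ᵥ B.mulVec x = y j := by
        rw [hx, dotProduct_single, mul_one]
      have h4 : y ⬝ᵥ B.mulVec p ≤ 0 := by
        rw [dotProduct]
        apply Finset.sum_nonpos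
        intro i _
        rw [Matrix.mulVec, dotProduct, Finset.mul_sum]
        apply Finset.sum_nonpos
        intro k _
        rcases eq_or_ne i k with rfl | hik
        · have heq : y i * (B i i * p i) = B i i * (y i * p i) := by ring
          rw [heq, hyp i, mul_zero]
        · have h5 := hoff i k hik
          have h6 := mul_nonneg (hynn i) (hpnn k)
          nlinarith
      have h6 : 0 ≤ y j := hynn j
      rw [h2, h3] at h1
      linarith
    intro i
    have h7 : y i = 0 := by rw [hy0]; rfl
    simp only [hy] at h7
    have h8 : -x i ≤ 0 := le_of_max_le_left (le_of_eq h7)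
    linarith
  -- value of B *ᵥ x at a point
  have hBx : ∀ i, ∑ k, B i k * x k = (Pi.single j 1 : n → ℝ) i := by
    intro i
    have := congrFun hx i
    simpa [Matrix.mulVec, dotProduct] using this
  -- Step 2: x j > 0.
  have hxj : 0 < x j := by
    rcases lt_or_eq_of_le (hxnn j) with h | h
    · exact h
    exfalso
    have h0 : ∑ k, B j k * x k ≤ 0 := by
      apply Finset.sum_nonpos
      intro k _
      rcases eq_or_ne j k with rfl | hk
      · rw [← h]; simp
      · exact mul_nonpos_of_nonpos_of_nonneg (hoff j k hk) (hxnn k)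
    have h1 := hBx j
    rw [Pi.single_eq_same] at h1
    rw [h1] at h0
    linarith
  -- Step 3: propagation of zeros along edges.
  have hprop : ∀ i k : n, x i = 0 → B i k < 0 → x k = 0 := by
    intro i k hxi hBik
    have hij : i ≠ j := by
      intro h; rw [h] at hxi; rw [hxi] at hxj; exact lt_irrefl _ hxj
    have h1 : ∑ l, B i l * x l = 0 := by
      rw [hBx i, Pi.single_eq_of_ne hij]
    have hterms : ∀ l ∈ Finset.univ, B i l * x l ≤ 0 := by
      intro l _
      rcases eq_or_ne i l with rfl | hil
      · rw [hxi, mul_zero]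
      · exact mul_nonpos_of_nonpos_of_nonneg (hoff i l hil) (hxnn l)
    have h2 := (Finset.sum_eq_zero_iff_of_nonpos hterms).mp h1 k (Finset.mem_univ k)
    exact (mul_eq_zero.mp h2).resolve_left (ne_of_lt hBik)
  -- Step 4: conclude by connectivity.
  intro i
  rcases lt_or_eq_of_le (hxnn i) with h | h
  · exact h
  exfalso
  obtain ⟨w⟩ := hconn.preconnected i j
  have key : ∀ {a b : n}, (SimpleGraph.fromRel (fun i k => B i k < 0)).Walk a b →
      x a = 0 → x b = 0 := by
    intro a b w
    induction w with
    | nil => exact fun h => h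
    | @cons u v _ hadj _ ih =>
      intro ha
      rcases hadj with ⟨_, hor⟩
      have huv : B u v < 0 := by
        rcases hor with h1 | h1
        · exact h1
        · rw [hsym u v]; exact h1
      exact ih (hprop _ _ ha huv)
  have hxj0 := key w h.symm
  rw [hxj0] at hxj
  exact lt_irrefl _ hxj

/-- For a symmetric negative definite real matrix `A` with nonnegative
off-diagonal entries whose associated graph (vertices `i ≠ j` adjacent exactly
when `A i j > 0`) is connected, `A` is invertible and all entries of `−A⁻¹` are
strictly positive. -/
theorem stmt_17 (n : Type*) [Fintype n] [DecidableEq n] [Nonempty n]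
    (A : Matrix n n ℝ) (hsymm : A.IsSymm)
    (hneg : ∀ x : n → ℝ, x ≠ 0 → x ⬝ᵥ A.mulVec x < 0)
    (hoff : ∀ i j : n, i ≠ j → 0 ≤ A i j)
    (hconn : (SimpleGraph.fromRel (fun i j => 0 < A i j)).Connected) :
    IsUnit A.det ∧ ∀ i j : n, 0 < (-(A⁻¹)) i j := by
  have hsym : ∀ i k : n, A i k = A k i := fun i k => by
    have := congrFun (congrFun hsymm k) i
    simpa [Matrix.transpose_apply] using this
  have hdet : IsUnit A.det := by
    rw [isUnit_iff_ne_zero]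
    intro h
    obtain ⟨v, hv, hAv⟩ := (Matrix.exists_mulVec_eq_zero_iff).mpr h
    have := hneg v hv
    rw [hAv, dotProduct_zero] at this
    exact lt_irrefl _ this
  refine ⟨hdet, ?_⟩
  set B : Matrix n n ℝ := -A with hB
  have hBdet : IsUnit B.det := by
    rw [hB, Matrix.det_neg, isUnit_iff_ne_zero]
    simp only [ne_eq, mul_eq_zero, not_or]
    constructor
    · positivity
    · exact isUnit_iff_ne_zero.mp hdet
  have hBinv : B⁻¹ = -(A⁻¹) := by
    apply Matrix.inv_eq_right_inv
    rw [hB, neg_mul_neg, Matrix.mul_nonsing_inv A hdet]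
  have hBsym : ∀ i k : n, B i k = B k i := fun i k => by
    simp [hB, hsym i k]
  have hBpd : ∀ x : n → ℝ, x ≠ 0 → 0 < x ⬝ᵥ B.mulVec x := by
    intro x hx
    rw [hB, Matrix.neg_mulVec, dotProduct_neg]
    linarith [hneg x hx]
  have hBoff : ∀ i k : n, i ≠ k → B i k ≤ 0 := fun i k hik => by
    simp only [hB, Matrix.neg_apply, neg_nonpos]
    exact hoff i k hik
  have hBconn : (SimpleGraph.fromRel (fun i k => B i k < 0)).Connected := by
    have : (fun i k => B i k < 0) = (fun i k => 0 < A i k) := by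
      funext i k
      simp [hB]
    rw [this]
    exact hconn
  intro i j
  have hx : B.mulVec (B⁻¹.mulVec (Pi.single j 1)) = Pi.single j 1 := by
    rw [Matrix.mulVec_mulVec, Matrix.mul_nonsing_inv B hBdet, Matrix.one_mulVec]
  have hpos := stmt_17_aux B hBsym hBpd hBoff hBconn _ j hx i
  rw [hBinv] at hpos
  simpa using hpos
end
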